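/- arXiv:1705.06627 — 2 statements merged into one kernel-verified Lean document; each statement's English description precedes it below -/
import Mathlib

section
/- Let n ≥ 2 and let −1 = k₀ < k₁ < … < k_{2n−1} = 1. Let q(ξ) = |∏_{j=0}^{2n−1}(ξ−k_j)|^{1/2} and define I_{mj} = ∫_{k_{2j}}^{k_{2j+1}} ξ^{m−1}/q(ξ) dξ for j = 1,…,n−1 and m = 1,…,n−1. Then the (n−1)×(n−1) matrix M with entries M_{mj} = (−1)^j I_{mj} is invertible. -/
/-!
If `v ᵥ* M = 0`, the polynomial `p ξ = ∑ m, v m * ξ ^ m` satisfies `∫ p / q = 0` over each of the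
`n - 1` gaps `(k_{2j}, k_{2j+1})`. As `q > 0` inside a gap, `p` changes sign there and so vanishes
somewhere in it. The gaps are disjoint, so `p`, of degree `< n - 1`, has `n - 1` distinct roots and
`v = 0` (Vandermonde). The integrals converge because on a gap `1 / q` is
`|ξ - k_{2j}| ^ (-1/2) * |ξ - k_{2j+1}| ^ (-1/2)` times a function continuous on the closed gap.
-/

open MeasureTheory Set Matrix

theorem intervalIntegrable_abs_rpow {r : ℝ} (hr : -1 < r) (a b : ℝ) :
    IntervalIntegrable (fun x : ℝ => |x| ^ r) volume a b := by
  have hpos : ∀ t, 0 ≤ t → IntervalIntegrable (fun x : ℝ => |x| ^ r) volume 0 t := fun t ht =>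
    (intervalIntegral.intervalIntegrable_rpow' hr).congr_uIoo fun x hx => by
      rw [uIoo_of_le ht] at hx
      rw [abs_of_pos hx.1]
  have hall : ∀ t, IntervalIntegrable (fun x : ℝ => |x| ^ r) volume 0 t := by
    intro t
    rcases le_total 0 t with ht | ht
    · exact hpos t ht
    · have h := hpos (-t) (neg_nonneg.2 ht)
      rw [IntervalIntegrable.iff_comp_neg] at h
      simpa using h
  exact (hall a).symm.trans (hall b)

theorem intervalIntegrable_abs_sub_rpow {r : ℝ} (hr : -1 < r) (a b c : ℝ) :
    IntervalIntegrable (fun x : ℝ => |x - c| ^ r) volume a b := by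
  simpa using (intervalIntegrable_abs_rpow hr (a - c) (b - c)).comp_sub_right c

theorem intervalIntegrable_abs_sub_rpow_mul_abs_sub_rpow_mul {a b r s : ℝ} (hab : a < b)
    (hr : -1 < r) (hs : -1 < s) {g : ℝ → ℝ} (hg : ContinuousOn g (Icc a b)) :
    IntervalIntegrable (fun x => |x - a| ^ r * (|x - b| ^ s * g x)) volume a b := by
  have half : ∀ {a b m r s : ℝ}, -1 < r → b ∉ uIcc a m → ContinuousOn g (uIcc a m) →
      IntervalIntegrable (fun x => |x - a| ^ r * (|x - b| ^ s * g x)) volume a m :=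
    fun hr hb hg => (intervalIntegrable_abs_sub_rpow hr _ _ _).mul_continuousOn <|
      ((continuousOn_id.sub continuousOn_const).abs.rpow_const fun x hx =>
        Or.inl (abs_ne_zero.2 (sub_ne_zero.2 (ne_of_mem_of_not_mem hx hb)))).mul hg
  obtain ⟨m, ham, hmb⟩ := exists_between hab
  have hleft := half (s := s) hr (by rw [uIcc_of_lt ham]; exact fun h => hmb.not_ge h.2)
    (hg.mono (by rw [uIcc_of_lt ham]; exact Icc_subset_Icc_right hmb.le))
  have hright := half (s := r) hs (by rw [uIcc_of_gt hmb]; exact fun h => ham.not_ge h.1)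
    (hg.mono (by rw [uIcc_of_gt hmb]; exact Icc_subset_Icc_left ham.le))
  refine hleft.trans ?_
  simpa only [mul_left_comm] using hright.symm

theorem StrictMono.apply_notMem_Ioo_of_covBy {α β : Type*} [LinearOrder α] [Preorder β]
    {f : α → β} (hf : StrictMono f) {a b : α} (hab : a ⋖ b) (x : α) :
    f x ∉ Ioo (f a) (f b) :=
  fun hx => hab.2 (hf.lt_iff_lt.1 hx.1) (hf.lt_iff_lt.1 hx.2)

theorem exists_mem_Ioo_eq_zero_of_integral_div_eq_zero {p w : ℝ → ℝ} {a b : ℝ} (hab : a < b)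
    (hp : ContinuousOn p (Ioo a b)) (hw : ∀ x ∈ Ioo a b, 0 < w x)
    (hint : IntervalIntegrable (fun x => p x / w x) volume a b)
    (h : ∫ x in a..b, p x / w x = 0) : ∃ x ∈ Ioo a b, p x = 0 := by
  by_contra! hne
  have hsign : (∀ x ∈ Ioo a b, 0 < p x) ∨ ∀ x ∈ Ioo a b, p x < 0 := by
    by_contra! ⟨⟨x, hx, hpx⟩, y, hy, hpy⟩
    obtain ⟨z, hz, hpz⟩ := isPreconnected_Ioo.intermediate_value hx hy hp ⟨hpx, hpy⟩
    exact hne z hz hpz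
  rcases hsign with hpos | hneg
  · exact (intervalIntegral.intervalIntegral_pos_of_pos_on hint
      (fun x hx => div_pos (hpos x hx) (hw x hx)) hab).ne' h
  · have := intervalIntegral.intervalIntegral_pos_of_pos_on hint.neg
      (fun x hx => neg_pos.2 (div_neg_of_neg_of_pos (hneg x hx) (hw x hx))) hab
    simp [intervalIntegral.integral_neg, h] at this

theorem intervalIntegrable_div_sqrt_abs_prod_sub {ι : Type*} [Fintype ι] {c : ι → ℝ}
    (hc : Function.Injective c) {i₀ i₁ : ι} (hlt : c i₀ < c i₁)
    (hgap : ∀ i, c i ∉ Ioo (c i₀) (c i₁)) {f : ℝ → ℝ} (hf : ContinuousOn f (Icc (c i₀) (c i₁))) :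
    IntervalIntegrable (fun x => f x / √|∏ i, (x - c i)|) volume (c i₀) (c i₁) := by
  classical
  set s := (Finset.univ.erase i₀).erase i₁
  have hne : i₁ ≠ i₀ := fun h => hlt.ne' (congrArg c h)
  have hprod : ∀ x, ∏ i, (x - c i) = (x - c i₀) * ((x - c i₁) * ∏ i ∈ s, (x - c i)) := fun x => by
    rw [← Finset.mul_prod_erase _ (fun i => x - c i) (Finset.mem_univ i₀),
      ← Finset.mul_prod_erase _ (fun i => x - c i) (Finset.mem_erase.2 ⟨hne, Finset.mem_univ _⟩)]
  have hrest : ∀ x ∈ Icc (c i₀) (c i₁), 0 < |∏ i ∈ s, (x - c i)| := by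
    refine fun x hx => abs_pos.2 (Finset.prod_ne_zero_iff.2 fun i hi => sub_ne_zero.2 ?_)
    rintro rfl
    obtain ⟨hi₁, hi₀⟩ := Finset.mem_erase.1 hi
    rcases hx.1.eq_or_lt with h₀ | h₀
    · exact (Finset.ne_of_mem_erase hi₀) (hc h₀.symm)
    rcases hx.2.eq_or_lt with h₁ | h₁
    · exact hi₁ (hc h₁)
    exact hgap i ⟨h₀, h₁⟩
  have hsplit : (fun x => f x / √|∏ i, (x - c i)|) = fun x => |x - c i₀| ^ (-(1 / 2) : ℝ) *
      (|x - c i₁| ^ (-(1 / 2) : ℝ) * (f x / √|∏ i ∈ s, (x - c i)|)) := by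
    funext x
    rw [hprod, abs_mul, abs_mul, Real.sqrt_mul (abs_nonneg _), Real.sqrt_mul (abs_nonneg _),
      Real.rpow_neg (abs_nonneg _), Real.rpow_neg (abs_nonneg _), ← Real.sqrt_eq_rpow,
      ← Real.sqrt_eq_rpow]
    ring
  rw [hsplit]
  exact intervalIntegrable_abs_sub_rpow_mul_abs_sub_rpow_mul hlt (by norm_num) (by norm_num)
    (hf.div (by fun_prop) fun x hx => (Real.sqrt_pos.2 (hrest x hx)).ne')

theorem intervalIntegral.integral_sum_mul_div {ι : Type*} (s : Finset ι) (v : ι → ℝ)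
    {f : ι → ℝ → ℝ} {w : ℝ → ℝ} {a b : ℝ}
    (hf : ∀ i ∈ s, IntervalIntegrable (fun x => f i x / w x) volume a b) :
    ∫ x in a..b, (∑ i ∈ s, v i * f i x) / w x = ∑ i ∈ s, v i * ∫ x in a..b, f i x / w x := by
  simp_rw [Finset.sum_div, mul_div_assoc]
  rw [intervalIntegral.integral_finsetSum fun i hi => (hf i hi).const_mul (v i)]
  simp_rw [intervalIntegral.integral_const_mul]

theorem stmt_10 (n : ℕ) (k : Fin (2 * n) → ℝ) (hmono : StrictMono k)
    (q : ℝ → ℝ) (hq : ∀ ξ : ℝ, q ξ = Real.sqrt |∏ i : Fin (2 * n), (ξ - k i)|)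
    (M : Matrix (Fin (n - 1)) (Fin (n - 1)) ℝ)
    (hM : ∀ (m j : Fin (n - 1)),
      M m j = (-1 : ℝ) ^ ((j : ℕ) + 1) *
        ∫ ξ in (k ⟨2 * ((j : ℕ) + 1), by omega⟩)..(k ⟨2 * ((j : ℕ) + 1) + 1, by omega⟩),
          ξ ^ (m : ℕ) / q ξ) :
    IsUnit M := by
  obtain rfl : q = fun ξ => √|∏ i, (ξ - k i)| := funext hq
  let lo : Fin (n - 1) → Fin (2 * n) := fun j => ⟨2 * ((j : ℕ) + 1), by omega⟩
  let hi : Fin (n - 1) → Fin (2 * n) := fun j => ⟨2 * ((j : ℕ) + 1) + 1, by omega⟩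
  have hcov : ∀ j, lo j ⋖ hi j := fun j => Fin.covBy_iff.2 (Order.covBy_add_one _)
  have hgap : ∀ j i, k i ∉ Ioo (k (lo j)) (k (hi j)) :=
    fun j => hmono.apply_notMem_Ioo_of_covBy (hcov j)
  have hint : ∀ j {f : ℝ → ℝ}, Continuous f →
      IntervalIntegrable (fun ξ => f ξ / √|∏ i, (ξ - k i)|) volume (k (lo j)) (k (hi j)) :=
    fun j f hf => intervalIntegrable_div_sqrt_abs_prod_sub hmono.injective (hmono (hcov j).lt)
      (hgap j) hf.continuousOn
  rw [isUnit_iff_isUnit_det, isUnit_iff_ne_zero, Ne, ← exists_vecMul_eq_zero_iff, not_exists]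
  rintro v ⟨hv, hvM⟩
  have hroot : ∀ j, ∃ r ∈ Ioo (k (lo j)) (k (hi j)), ∑ m, v m * r ^ (m : ℕ) = 0 := by
    intro j
    refine exists_mem_Ioo_eq_zero_of_integral_div_eq_zero (hmono (hcov j).lt) (by fun_prop)
      (fun x hx => Real.sqrt_pos.2 (abs_pos.2 (Finset.prod_ne_zero_iff.2 fun i _ =>
        sub_ne_zero.2 fun h : x = k i => hgap j i (h ▸ hx)))) (hint j (by fun_prop)) ?_
    rw [intervalIntegral.integral_sum_mul_div _ _ fun m _ => hint j (continuous_pow _)]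
    have hj := congrFun hvM j
    simp only [vecMul, dotProduct, hM, Pi.zero_apply, mul_left_comm _ ((-1 : ℝ) ^ _),
      ← Finset.mul_sum] at hj
    exact (mul_eq_zero.1 hj).resolve_left (pow_ne_zero _ (by norm_num))
  choose r hr hr0 using hroot
  have hr_mono : StrictMono r := fun j j' hjj' =>
    calc r j < k (hi j) := (hr j).2
      _ ≤ k (lo j') := hmono.monotone (Fin.mk_le_mk.2 (by simp only [Fin.lt_def] at hjj'; omega))
      _ < r j' := (hr j').1
  exact hv (eq_zero_of_forall_index_sum_mul_pow_eq_zero hr_mono.injective hr0)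
end

section
/- With δ = (2κ₀τ^∞ − (κ₀+1)τ)/((1−κ₀)·conj(τ)) (κ₀ ≠ 1, τ ≠ 0 complex), the solution of the system γ₀' = (β₀−d₀')μ₀/(1−κ₀), γ₋₁' + γ₁' = 2β₁''μ₀/(1−κ₀), γ₋₁'' − γ₁'' = 2β₁'μ₀/(1−κ₀), together with the matching conditions γ₁ = conj(τ)c₋₁ and β₁ = ((conj(τ^∞)−conj(τ))/μ)·i·c₋₁ (c₋₁ real, κ₀ = μ₀/μ), yields γ₋₁ = conj(τ)·c₋₁·δ; i.e., the coefficient of 1/ζ in conj(τ)ω(ζ) equals conj(τ)c₋₁δ. -/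
/-! The two real equations for `γ₋₁` are the real and imaginary parts of the single complex
equation `γ₋₁ + conj γ₁ = (2μ₀/(1-κ₀)) i conj β₁`; substituting `γ₁` and `β₁` then determines
`γ₋₁` by field arithmetic. -/

open Complex ComplexConjugate

theorem Complex.add_conj_eq_ofReal_mul_I_mul_conj {z w β : ℂ} {r : ℝ}
    (hre : z.re + w.re = β.im * r) (him : z.im - w.im = β.re * r) :
    z + conj w = r * (I * conj β) := by
  apply Complex.ext <;>
    simp only [add_re, add_im, conj_re, conj_im, mul_re, mul_im, ofReal_re, ofReal_im, I_re, I_im,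
      zero_mul, one_mul, mul_neg, neg_zero, sub_neg_eq_add, zero_add, add_zero, sub_zero] <;>
    linarith

theorem stmt_16_general (τ τinf : ℂ) (hτ : τ ≠ 0)
    (μ μ₀ : ℝ)
    (κ₀ : ℝ) (hκ : κ₀ = μ₀ / μ) (hκ1 : κ₀ ≠ 1)
    (cm1 : ℝ) (β₁ γm1 γ₁ : ℂ)
    (h1 : γm1.re + γ₁.re = 2 * β₁.im * μ₀ / (1 - κ₀))
    (h2 : γm1.im - γ₁.im = 2 * β₁.re * μ₀ / (1 - κ₀))
    (h3 : γ₁ = starRingEnd ℂ τ * (cm1 : ℂ))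
    (h4 : β₁ = ((starRingEnd ℂ τinf - starRingEnd ℂ τ) / (μ : ℂ)) * Complex.I * (cm1 : ℂ)) :
    γm1 = starRingEnd ℂ τ * (cm1 : ℂ) *
      ((2 * (κ₀ : ℂ) * τinf - ((κ₀ : ℂ) + 1) * τ) / ((1 - (κ₀ : ℂ)) * starRingEnd ℂ τ)) := by
  have hsum : γm1 + conj γ₁ = ((2 * μ₀ / (1 - κ₀) : ℝ) : ℂ) * (I * conj β₁) :=
    add_conj_eq_ofReal_mul_I_mul_conj (by rw [h1]; ring) (by rw [h2]; ring)
  have hβ : ((2 * μ₀ / (1 - κ₀) : ℝ) : ℂ) * (I * conj β₁)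
      = 2 * κ₀ / (1 - κ₀) * (τinf - τ) * cm1 := by
    subst h4 hκ
    simp only [map_mul, map_div₀, map_sub, conj_conj, conj_ofReal, conj_I]
    push_cast
    ring_nf
    rw [I_sq]
    ring
  have hk : (1 : ℂ) - κ₀ ≠ 0 := by exact_mod_cast sub_ne_zero.mpr hκ1.symm
  have hτc : conj τ ≠ 0 := by simpa using hτ
  rw [h3, map_mul, conj_conj, conj_ofReal, hβ] at hsum
  rw [eq_sub_of_add_eq hsum]
  field_simp
  ring

theorem stmt_16 (τ τinf : ℂ) (hτ : τ ≠ 0) (hτinf : τinf ≠ 0)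
    (μ μ₀ : ℝ) (hμ : 0 < μ) (hμ₀ : 0 < μ₀)
    (κ₀ : ℝ) (hκ : κ₀ = μ₀ / μ) (hκ1 : κ₀ ≠ 1)
    (cm1 β₀ d₀' γ₀' : ℝ) (β₁ γm1 γ₁ : ℂ)
    (h0 : γ₀' = (β₀ - d₀') * μ₀ / (1 - κ₀))
    (h1 : γm1.re + γ₁.re = 2 * β₁.im * μ₀ / (1 - κ₀))
    (h2 : γm1.im - γ₁.im = 2 * β₁.re * μ₀ / (1 - κ₀))
    (h3 : γ₁ = starRingEnd ℂ τ * (cm1 : ℂ))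
    (h4 : β₁ = ((starRingEnd ℂ τinf - starRingEnd ℂ τ) / (μ : ℂ)) * Complex.I * (cm1 : ℂ)) :
    γm1 = starRingEnd ℂ τ * (cm1 : ℂ) *
      ((2 * (κ₀ : ℂ) * τinf - ((κ₀ : ℂ) + 1) * τ) / ((1 - (κ₀ : ℂ)) * starRingEnd ℂ τ)) :=
  stmt_16_general τ τinf hτ μ μ₀ κ₀ hκ hκ1 cm1 β₁ γm1 γ₁ h1 h2 h3 h4
end
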